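/- Fix n ≥ 2 and let H be the matrix indexed by bit strings x, y ∈ {0,1}^n with entries: H_{x,x} = (1/2)(n − Σ_{k=1}^{n−1} (−1)^{x_k + x_{k+1}}), H_{x,x̄} = −1/2 for every x (where x̄ is the bitwise negation of x), and all other entries zero. (This is the GHZ parent Hamiltonian H = (1/2)(n𝟙 − Σ_{k=1}^{n−1} Z_k Z_{k+1} − X^{⊗n}).) Then H is positive semidefinite and its kernel equals the one-dimensional subspace ℂ·(e_{0^n} + e_{1^n}); in particular the n-qubit GHZ state |0^n⟩ + |1^n⟩ (up to normalization) is the unique ground state of H. -/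

import Mathlib

/-!
Counting domain walls `d(x) = #{k | x_k ≠ x_{k+1}}`, one has
`(-1)^(x_k + x_{k+1}) = 1 - 2 [x_k ≠ x_{k+1}]`, so `H = D + (1 - X^{⊗n}) / 2` where `D` is the
diagonal matrix of the `d(x)`. Both summands are positive semidefinite, the second being the
orthogonal projection onto the vectors that are odd under the flip `x ↦ x̄`. For positive
semidefinite `A, B` the kernel of `A + B` is the intersection of the kernels, so `Hv = 0` iff `v`
vanishes on strings with a domain wall and `v(x̄) = v(x)`; the only strings without a domain wall
are `0ⁿ` and `1ⁿ`, which are swapped by the flip.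
-/

open Matrix ComplexOrder

/-- Bitwise negation of a bit string. -/
def bnot' {n : ℕ} (x : Fin n → Fin 2) : Fin n → Fin 2 := fun l => 1 - x l

/-- The GHZ parent Hamiltonian H = (1/2)(n𝟙 − Σ_{k=1}^{n−1} Z_k Z_{k+1} − X^{⊗n}),
as a matrix indexed by bit strings: diagonal entries
H_{x,x} = (1/2)(n − Σ_{k=1}^{n−1} (−1)^{x_k + x_{k+1}}), anti-diagonal entries
H_{x,x̄} = −1/2, all other entries zero. -/
noncomputable def ghzParent (n : ℕ) (hn : 2 ≤ n) :
    Matrix (Fin n → Fin 2) (Fin n → Fin 2) ℂ :=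
  Matrix.of fun x y =>
    if y = x then
      (1 / 2 : ℂ) * ((n : ℂ) - ∑ k ∈ (Finset.range (n - 1)).attach,
        (-1 : ℂ) ^
          ((x ⟨k.1, by have := Finset.mem_range.mp k.2; omega⟩ : ℕ) +
           (x ⟨k.1 + 1, by have := Finset.mem_range.mp k.2; omega⟩ : ℕ)))
    else if y = bnot' x then -(1 / 2 : ℂ) else 0

namespace Matrix

variable {ι 𝕜 : Type*} [Fintype ι] [RCLike 𝕜]

theorem PosSemidef.add_mulVec_eq_zero_iff {A B : Matrix ι ι 𝕜} (hA : A.PosSemidef)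
    (hB : B.PosSemidef) (v : ι → 𝕜) : (A + B) *ᵥ v = 0 ↔ A *ᵥ v = 0 ∧ B *ᵥ v = 0 := by
  rw [← (hA.add hB).dotProduct_mulVec_zero_iff, add_mulVec, dotProduct_add,
    add_eq_zero_iff_of_nonneg (hA.dotProduct_mulVec_nonneg v) (hB.dotProduct_mulVec_nonneg v),
    hA.dotProduct_mulVec_zero_iff, hB.dotProduct_mulVec_zero_iff]

variable [DecidableEq ι]

theorem diagonal_mulVec_eq_zero_iff (d v : ι → 𝕜) :
    diagonal d *ᵥ v = 0 ↔ ∀ i, d i = 0 ∨ v i = 0 := by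
  simp only [funext_iff, mulVec_diagonal, Pi.zero_apply, mul_eq_zero]

variable (𝕜) in
def oddPart (σ : Equiv.Perm ι) : Matrix ι ι 𝕜 := (2⁻¹ : 𝕜) • (1 - σ.permMatrix 𝕜)

theorem oddPart_mulVec_eq_zero_iff (σ : Equiv.Perm ι) (v : ι → 𝕜) :
    oddPart 𝕜 σ *ᵥ v = 0 ↔ v ∘ σ = v := by
  rw [oddPart, smul_mulVec, sub_mulVec, one_mulVec, permMatrix_mulVec, smul_eq_zero,
    sub_eq_zero]
  simp only [inv_eq_zero, two_ne_zero, false_or]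
  exact eq_comm

theorem conjTranspose_oddPart_mul_self {σ : Equiv.Perm ι} (hσ : σ * σ = 1) :
    (oddPart 𝕜 σ)ᴴ * oddPart 𝕜 σ = oddPart 𝕜 σ := by
  have hinv : σ⁻¹ = σ := inv_eq_of_mul_eq_one_left hσ
  have hsq : σ.permMatrix 𝕜 * σ.permMatrix 𝕜 = 1 := by rw [← permMatrix_mul, hσ, permMatrix_one]
  simp only [oddPart, conjTranspose_smul, conjTranspose_sub, conjTranspose_one,
    conjTranspose_permMatrix, hinv, smul_mul_smul, sub_mul, mul_sub, one_mul, mul_one, hsq,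
    star_inv₀, star_ofNat]
  module

theorem posSemidef_oddPart {σ : Equiv.Perm ι} (hσ : σ * σ = 1) : (oddPart 𝕜 σ).PosSemidef :=
  conjTranspose_oddPart_mul_self (𝕜 := 𝕜) hσ ▸ posSemidef_conjTranspose_mul_self _

theorem diagonal_add_oddPart_mulVec_eq_zero_iff {d : ι → 𝕜} (hd : 0 ≤ d) {σ : Equiv.Perm ι}
    (hσ : σ * σ = 1) (v : ι → 𝕜) :
    (diagonal d + oddPart 𝕜 σ) *ᵥ v = 0 ↔ (∀ i, d i = 0 ∨ v i = 0) ∧ v ∘ σ = v := by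
  rw [(PosSemidef.diagonal hd).add_mulVec_eq_zero_iff (posSemidef_oddPart hσ),
    diagonal_mulVec_eq_zero_iff, oddPart_mulVec_eq_zero_iff]

end Matrix

theorem bnot'_involutive (n : ℕ) : Function.Involutive (bnot' (n := n)) :=
  fun x => funext fun l => by simp [bnot']

theorem bnot'_ne_self {n : ℕ} [NeZero n] (x : Fin n → Fin 2) : bnot' x ≠ x := by
  have h : ∀ a : Fin 2, 1 - a ≠ a := by decide
  exact fun hx => h _ (congrFun hx 0)

theorem bnot'_const {n : ℕ} (b : Fin 2) : bnot' (fun _ : Fin n => b) = fun _ => 1 - b := rfl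

/-- The spin flip `X^{⊗n}` as a permutation of the bit strings. -/
def flipPerm (n : ℕ) : Equiv.Perm (Fin n → Fin 2) := (bnot'_involutive n).toPerm

theorem flipPerm_mul_self (n : ℕ) : flipPerm n * flipPerm n = 1 :=
  Equiv.ext (bnot'_involutive n)

-- The number of `k` with `x k ≠ x (k + 1)`, indexed exactly as the sum in `ghzParent` so that the
-- diagonal entries can be compared term by term.
def domainWalls {n : ℕ} (x : Fin n → Fin 2) : ℕ :=
  ∑ k ∈ (Finset.range (n - 1)).attach,
    if x ⟨k.1, by have := Finset.mem_range.mp k.2; omega⟩ =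
        x ⟨k.1 + 1, by have := Finset.mem_range.mp k.2; omega⟩ then 0 else 1

theorem neg_one_pow_val_add_val {R : Type*} [Ring R] (a b : Fin 2) :
    (-1 : R) ^ ((a : ℕ) + (b : ℕ)) = 1 - 2 * ((if a = b then 0 else 1 : ℕ) : R) := by
  fin_cases a <;> fin_cases b <;> norm_num

theorem Fin.eq_const_of_apply_eq_apply_succ {α : Type*} {n : ℕ} [NeZero n] (x : Fin n → α)
    (h : ∀ k (hk : k + 1 < n), x ⟨k, by omega⟩ = x ⟨k + 1, hk⟩) : x = fun _ => x 0 := by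
  funext ⟨i, hi⟩
  induction i with
  | zero => rfl
  | succ i ih => rw [← h i hi, ih]

theorem domainWalls_eq_zero_iff {n : ℕ} [NeZero n] (x : Fin n → Fin 2) :
    domainWalls x = 0 ↔ ∃ b, x = fun _ => b := by
  constructor
  · intro hx
    refine ⟨x 0, Fin.eq_const_of_apply_eq_apply_succ x fun k hk => ?_⟩
    simpa using
      Finset.sum_eq_zero_iff.mp hx ⟨k, Finset.mem_range.mpr (by omega)⟩ (Finset.mem_attach _ _)
  · rintro ⟨b, rfl⟩
    simp [domainWalls]

theorem ghzParent_apply_self (n : ℕ) (hn : 2 ≤ n) (x : Fin n → Fin 2) :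
    ghzParent n hn x x = 2⁻¹ + domainWalls x := by
  simp only [ghzParent, of_apply, if_true, neg_one_pow_val_add_val, Finset.sum_sub_distrib,
    Finset.sum_const, Finset.card_attach, Finset.card_range, ← Finset.mul_sum, domainWalls,
    nsmul_one, Nat.cast_sum, Nat.cast_sub (by omega : 1 ≤ n), Nat.cast_one]
  ring

theorem ghzParent_eq_diagonal_add_oddPart (n : ℕ) (hn : 2 ≤ n) :
    ghzParent n hn = diagonal (fun x => (domainWalls x : ℂ)) + oddPart ℂ (flipPerm n) := by
  have : NeZero n := ⟨by omega⟩
  ext x y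
  rcases eq_or_ne y x with rfl | hxy
  · simp [ghzParent_apply_self, oddPart, flipPerm, bnot'_ne_self]
    ring
  rcases eq_or_ne y (bnot' x) with rfl | hy
  · simp [ghzParent, oddPart, flipPerm, bnot'_ne_self, (bnot'_ne_self x).symm]
  · simp [ghzParent, oddPart, flipPerm, hxy, hy, hxy.symm, hy.symm]

theorem const_zero_ne_const_one {n : ℕ} [NeZero n] :
    (fun _ : Fin n => (0 : Fin 2)) ≠ fun _ => 1 :=
  Function.const_injective.ne (by decide)

theorem exists_eq_smul_ghz_iff {R : Type*} [Semiring R] {n : ℕ} [NeZero n]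
    (v : (Fin n → Fin 2) → R) :
    (∃ c : R, v = c • (Pi.single (fun _ => 0) 1 + Pi.single (fun _ => 1) 1)) ↔
      (∀ x, domainWalls x = 0 ∨ v x = 0) ∧ v ∘ flipPerm n = v := by
  constructor
  · rintro ⟨c, rfl⟩
    refine ⟨fun x => or_iff_not_imp_left.mpr fun hx => ?_, funext fun x => ?_⟩
    · have hconst := not_exists.mp (mt (domainWalls_eq_zero_iff x).mpr hx)
      simp [hconst]
    · simp [flipPerm, Pi.single_apply, (bnot'_involutive n).eq_iff, bnot'_const, add_comm,
        mul_add]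
  · rintro ⟨hsupp, hflip⟩
    refine ⟨v fun _ => 0, funext fun x => ?_⟩
    by_cases hx : domainWalls x = 0
    · obtain ⟨b, rfl⟩ := (domainWalls_eq_zero_iff x).mp hx
      fin_cases b
      · simp [const_zero_ne_const_one]
      · have hv := congrFun hflip fun _ => 0
        simp_all [flipPerm, bnot'_const, const_zero_ne_const_one.symm]
    · have hconst := not_exists.mp (mt (domainWalls_eq_zero_iff x).mpr hx)
      simp [(hsupp x).resolve_left hx, hconst]

/-- The GHZ parent Hamiltonian is positive semidefinite and its kernel
is the one-dimensional subspace spanned by e_{0^n} + e_{1^n}: the GHZ state is its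
unique ground state. -/
theorem ghz_parent_hamiltonian (n : ℕ) (hn : 2 ≤ n) :
    (ghzParent n hn).PosSemidef ∧
    {v : (Fin n → Fin 2) → ℂ | (ghzParent n hn).mulVec v = 0} =
      {v : (Fin n → Fin 2) → ℂ |
        ∃ c : ℂ, v = c • (Pi.single (fun _ => 0) 1 + Pi.single (fun _ => 1) 1)} := by
  have : NeZero n := ⟨by omega⟩
  have hd : 0 ≤ fun x : Fin n → Fin 2 => (domainWalls x : ℂ) := fun x => Nat.cast_nonneg _
  rw [ghzParent_eq_diagonal_add_oddPart]
  refine ⟨(PosSemidef.diagonal hd).add (posSemidef_oddPart (flipPerm_mul_self n)),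
    Set.ext fun v => ?_⟩
  rw [Set.mem_ofPred_eq, Set.mem_ofPred_eq, exists_eq_smul_ghz_iff,
    diagonal_add_oddPart_mulVec_eq_zero_iff hd (flipPerm_mul_self n)]
  simp only [Nat.cast_eq_zero]
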